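/- Subset collection holds: for every ternary predicate P : ZFSet → ZFSet → ZFSet → Prop and all sets a and b, there exists a set c such that for every set u, if for every x ∈ a there exists y ∈ b with P u x y, then there exists d ∈ c such that (1) for every x ∈ a there exists y ∈ d with P u x y, and (2) for every y ∈ d there exists x ∈ a with P u x y. -/
import Mathlib

theorem zfset_subset_collection (P : ZFSet → ZFSet → ZFSet → Prop) (a b : ZFSet) :
    ∃ c : ZFSet, ∀ u : ZFSet,
      (∀ x : ZFSet, x ∈ a → ∃ y : ZFSet, y ∈ b ∧ P u x y) →
      ∃ d : ZFSet, d ∈ c ∧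
        (∀ x : ZFSet, x ∈ a → ∃ y : ZFSet, y ∈ d ∧ P u x y) ∧
        (∀ y : ZFSet, y ∈ d → ∃ x : ZFSet, x ∈ a ∧ P u x y) := by
  refine ⟨ZFSet.powerset b, fun u hu => ?_⟩
  refine ⟨ZFSet.sep (fun y => ∃ x, x ∈ a ∧ P u x y) b, ?_, ?_, ?_⟩
  · rw [ZFSet.mem_powerset]
    intro y hy
    exact (ZFSet.mem_sep.1 hy).1
  · intro x hx
    obtain ⟨y, hyb, hP⟩ := hu x hx
    exact ⟨y, ZFSet.mem_sep.2 ⟨hyb, x, hx, hP⟩, hP⟩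
  · intro y hy
    exact (ZFSet.mem_sep.1 hy).2
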